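/- Let D be a triangulated category with a recollement by Y and X, and let (D_{≥0}, D_{≤0}) be the co-t-structure glued from co-t-structures (Y_{≥0}, Y_{≤0}) and (X_{≥0}, X_{≤0}) associated with silting objects Y and X. Let β_{≥1}i^!j_!X → i^!j_!X → β_{≤0}i^!j_!X → (β_{≥1}i^!j_!X)[1] be a truncation triangle in Y, and define K_X by the triangle i_*β_{≥1}i^!j_!X → j_!X → K_X → (i_*β_{≥1}i^!j_!X)[1], where the first map corresponds via adjunction to β_{≥1}i^!j_!X → i^!j_!X. Then K_X lies in the co-heart D_{≥0} ∩ D_{≤0}. -/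

import Mathlib

open CategoryTheory Limits Pretriangulated

namespace Glueing

variable (D : Type*) [Category D] [HasZeroObject D] [Preadditive D] [HasShift D ℤ]
  [∀ n : ℤ, (shiftFunctor D n).Additive] [Pretriangulated D]

/-- A torsion pair in a triangulated category: a pair of strict (iso-closed) full
subcategories, closed under direct summands, with no morphisms from the first to the
second, such that every object is an extension of an object of the second class by an
object of the first class. -/
structure IsTorsionPair (P Q : D → Prop) : Prop where
  isoClosed_left : ∀ {A B : D}, (A ≅ B) → P A → P B
  isoClosed_right : ∀ {A B : D}, (A ≅ B) → Q A → Q B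
  summands_left : ∀ {A B : D} (i : A ⟶ B) (r : B ⟶ A), i ≫ r = 𝟙 A → P B → P A
  summands_right : ∀ {A B : D} (i : A ⟶ B) (r : B ⟶ A), i ≫ r = 𝟙 A → Q B → Q A
  orthogonal : ∀ {A B : D}, P A → Q B → ∀ f : A ⟶ B, f = 0
  exists_triangle : ∀ Z : D, ∃ (A B : D) (f : A ⟶ Z) (g : Z ⟶ B) (h : B ⟶ A⟦(1 : ℤ)⟧),
    P A ∧ Q B ∧ Triangle.mk f g h ∈ distinguishedTriangles

/-- A t-structure `(D^{≤0}, D^{≥0})` on a triangulated category, encoded as the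
requirement that `(D^{≤0}, D^{≥1})` is a torsion pair with `D^{≤0}[1] ⊆ D^{≤0}`.
Here `Le` is `D^{≤0}` and `Ge` is `D^{≥0}`; the class `D^{≥1} = D^{≥0}[-1]` consists
of objects `B` with `Ge (B⟦1⟧)`. -/
structure IsTStructure (Le Ge : D → Prop) : Prop where
  isoClosed_le : ∀ {A B : D}, (A ≅ B) → Le A → Le B
  isoClosed_ge : ∀ {A B : D}, (A ≅ B) → Ge A → Ge B
  summands_le : ∀ {A B : D} (i : A ⟶ B) (r : B ⟶ A), i ≫ r = 𝟙 A → Le B → Le A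
  summands_ge : ∀ {A B : D} (i : A ⟶ B) (r : B ⟶ A), i ≫ r = 𝟙 A → Ge B → Ge A
  shift_le : ∀ A : D, Le A → Le (A⟦(1 : ℤ)⟧)
  shift_ge : ∀ A : D, Ge A → Ge (A⟦(-1 : ℤ)⟧)
  orthogonal : ∀ {A B : D}, Le A → Ge (B⟦(1 : ℤ)⟧) → ∀ f : A ⟶ B, f = 0
  exists_triangle : ∀ Z : D, ∃ (A B : D) (f : A ⟶ Z) (g : Z ⟶ B) (h : B ⟶ A⟦(1 : ℤ)⟧),
    Le A ∧ Ge (B⟦(1 : ℤ)⟧) ∧ Triangle.mk f g h ∈ distinguishedTriangles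

/-- A co-t-structure `(D_{≥0}, D_{≤0})` on a triangulated category; `Ge` is `D_{≥0}`
and `Le` is `D_{≤0}`. The class `D_{≤-1} = D_{≤0}[1]` consists of objects `B` with
`Le (B⟦-1⟧)`. -/
structure IsCoTStructure (Ge Le : D → Prop) : Prop where
  isoClosed_ge : ∀ {A B : D}, (A ≅ B) → Ge A → Ge B
  isoClosed_le : ∀ {A B : D}, (A ≅ B) → Le A → Le B
  summands_ge : ∀ {A B : D} (i : A ⟶ B) (r : B ⟶ A), i ≫ r = 𝟙 A → Ge B → Ge A
  summands_le : ∀ {A B : D} (i : A ⟶ B) (r : B ⟶ A), i ≫ r = 𝟙 A → Le B → Le A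
  shift_ge : ∀ A : D, Ge A → Ge (A⟦(-1 : ℤ)⟧)
  shift_le : ∀ A : D, Le A → Le (A⟦(1 : ℤ)⟧)
  orthogonal : ∀ {A B : D}, Ge A → Le (B⟦(-1 : ℤ)⟧) → ∀ f : A ⟶ B, f = 0
  exists_triangle : ∀ Z : D, ∃ (A B : D) (f : A ⟶ Z) (g : Z ⟶ B) (h : B ⟶ A⟦(1 : ℤ)⟧),
    Ge A ∧ Le (B⟦(-1 : ℤ)⟧) ∧ Triangle.mk f g h ∈ distinguishedTriangles

variable (Y X : Type*) [Category Y] [HasZeroObject Y] [Preadditive Y] [HasShift Y ℤ]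
  [∀ n : ℤ, (shiftFunctor Y n).Additive] [Pretriangulated Y]
  [Category X] [HasZeroObject X] [Preadditive X] [HasShift X ℤ]
  [∀ n : ℤ, (shiftFunctor X n).Additive] [Pretriangulated X]

/-- A recollement of a triangulated category `D` by triangulated categories `Y` and `X`:
six triangle functors `i^* ⊣ i_* ⊣ i^!` and `j_! ⊣ j^* ⊣ j_*` with `i_*, j_!, j_*`
fully faithful, `j^* ∘ i_* = 0`, and the two canonical glueing triangles. -/
structure Recollement where
  iStar : D ⥤ Y
  iLower : Y ⥤ D
  iShriek : D ⥤ Y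
  jLower : X ⥤ D
  jStar : D ⥤ X
  jUpper : X ⥤ D
  commShift_iStar : iStar.CommShift ℤ
  commShift_iLower : iLower.CommShift ℤ
  commShift_iShriek : iShriek.CommShift ℤ
  commShift_jLower : jLower.CommShift ℤ
  commShift_jStar : jStar.CommShift ℤ
  commShift_jUpper : jUpper.CommShift ℤ
  isTriangulated_iStar : letI := commShift_iStar; iStar.IsTriangulated
  isTriangulated_iLower : letI := commShift_iLower; iLower.IsTriangulated
  isTriangulated_iShriek : letI := commShift_iShriek; iShriek.IsTriangulated
  isTriangulated_jLower : letI := commShift_jLower; jLower.IsTriangulated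
  isTriangulated_jStar : letI := commShift_jStar; jStar.IsTriangulated
  isTriangulated_jUpper : letI := commShift_jUpper; jUpper.IsTriangulated
  adj_i₁ : iStar ⊣ iLower
  adj_i₂ : iLower ⊣ iShriek
  adj_j₁ : jLower ⊣ jStar
  adj_j₂ : jStar ⊣ jUpper
  iLower_full : iLower.Full
  iLower_faithful : iLower.Faithful
  jLower_full : jLower.Full
  jLower_faithful : jLower.Faithful
  jUpper_full : jUpper.Full
  jUpper_faithful : jUpper.Faithful
  jStar_iLower_zero : ∀ A : Y, IsZero (jStar.obj (iLower.obj A))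
  triangle₁ : ∀ Z : D, ∃ δ : jUpper.obj (jStar.obj Z) ⟶ (iLower.obj (iShriek.obj Z))⟦(1 : ℤ)⟧,
    Triangle.mk (adj_i₂.counit.app Z) (adj_j₂.unit.app Z) δ ∈ distinguishedTriangles
  triangle₂ : ∀ Z : D, ∃ δ : iLower.obj (iStar.obj Z) ⟶ (jLower.obj (jStar.obj Z))⟦(1 : ℤ)⟧,
    Triangle.mk (adj_j₁.counit.app Z) (adj_i₁.unit.app Z) δ ∈ distinguishedTriangles

/-- An object `M` generates a triangulated category if the only class of objects which
is closed under isomorphisms, shifts, extensions and direct summands and contains `M`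
is the class of all objects. -/
def Generates (C : Type*) [Category C] [HasZeroObject C] [Preadditive C] [HasShift C ℤ]
    [∀ n : ℤ, (shiftFunctor C n).Additive] [Pretriangulated C] (M : C) : Prop :=
  ∀ P : C → Prop,
    (∀ {A B : C}, (A ≅ B) → P A → P B) →
    (∀ (n : ℤ) (A : C), P A → P (A⟦n⟧)) →
    (∀ T : Triangle C, T ∈ distinguishedTriangles → P T.obj₁ → P T.obj₃ → P T.obj₂) →
    (∀ {A B : C} (i : A ⟶ B) (r : B ⟶ A), i ≫ r = 𝟙 A → P B → P A) →
    P M → ∀ Z : C, P Z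

/-- A silting object: no positive self-extensions, and it generates the category. -/
def IsSilting (C : Type*) [Category C] [HasZeroObject C] [Preadditive C] [HasShift C ℤ]
    [∀ n : ℤ, (shiftFunctor C n).Additive] [Pretriangulated C] (M : C) : Prop :=
  (∀ i : ℤ, 0 < i → ∀ f : M ⟶ M⟦i⟧, f = 0) ∧ Generates C M

end Glueing

/-!
Apply the three functors `j^*`, `i^*`, `i^!` to the triangle `i_*B₁ → j_!X₀ → K → i_*B₁[1]`.
Since `j^*i_* = 0`, `j^*K ≅ j^*j_!X₀ ≅ X₀`; since `i^*j_! = 0`, `i^*K ≅ i^*i_*B₁[1] ≅ B₁[1]`;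
and since `i^!i_* ≅ id` carries the first map back to `u`, the image under `i^!` is the
truncation triangle, so `i^!K ≅ B₀`. As co-t-structure classes are closed under isomorphisms,
these three isomorphisms place `K` in the glued co-heart.
-/

namespace Glueing.Recollement

universe v₁ v₂ v₃ u₁ u₂ u₃

variable {D : Type u₁} {Y : Type u₂} {X : Type u₃}
  [Category.{v₁} D] [HasZeroObject D] [Preadditive D] [HasShift D ℤ]
  [∀ n : ℤ, (shiftFunctor D n).Additive] [Pretriangulated D]
  [Category.{v₂} Y] [HasZeroObject Y] [Preadditive Y] [HasShift Y ℤ]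
  [∀ n : ℤ, (shiftFunctor Y n).Additive] [Pretriangulated Y]
  [Category.{v₃} X] [HasZeroObject X] [Preadditive X] [HasShift X ℤ]
  [∀ n : ℤ, (shiftFunctor X n).Additive] [Pretriangulated X]
  (R : Recollement D Y X)

instance : R.iLower.Full := R.iLower_full
instance : R.iLower.Faithful := R.iLower_faithful
instance : R.jLower.Full := R.jLower_full
instance : R.jLower.Faithful := R.jLower_faithful
instance : R.iStar.CommShift ℤ := R.commShift_iStar
instance : R.iShriek.CommShift ℤ := R.commShift_iShriek
instance : R.jStar.CommShift ℤ := R.commShift_jStar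
instance : R.iStar.IsTriangulated := R.isTriangulated_iStar
instance : R.iShriek.IsTriangulated := R.isTriangulated_iShriek
instance : R.jStar.IsTriangulated := R.isTriangulated_jStar

theorem isZero_iStar_obj_jLower_obj (A : X) : IsZero (R.iStar.obj (R.jLower.obj A)) := by
  obtain ⟨δ, hδ⟩ := R.triangle₂ (R.jLower.obj A)
  exact IsZero.of_full_of_faithful_of_isZero R.iLower _
    (Triangle.isZero₃_of_isIso₁ _ hδ (inferInstanceAs (IsIso (R.adj_j₁.counit.app _))))

section Triangle

variable {B : Y} {K : D} {h : K ⟶ (R.iLower.obj B)⟦(1 : ℤ)⟧}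

theorem isIso_jStar_map_of_distinguished {Z : D} {f : R.iLower.obj B ⟶ Z} {g : Z ⟶ K}
    (hT : Triangle.mk f g h ∈ distTriang D) :
    IsIso (R.jStar.map g) :=
  (Triangle.isZero₁_iff_isIso₂ _ (R.jStar.map_distinguished _ hT)).1
    (R.jStar_iLower_zero B)

noncomputable def iStarObjIsoShiftOfDistinguished {A : X} {f : R.iLower.obj B ⟶ R.jLower.obj A}
    {g : R.jLower.obj A ⟶ K} (hT : Triangle.mk f g h ∈ distTriang D) :
    R.iStar.obj K ≅ B⟦(1 : ℤ)⟧ := by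
  have := (Triangle.isZero₂_iff_isIso₃ _ (R.iStar.map_distinguished _ hT)).1
    (R.isZero_iStar_obj_jLower_obj A)
  let mor₃Iso := asIso (R.iStar.mapTriangle.obj (Triangle.mk f g h)).mor₃
  let counitIso := asIso (R.adj_i₁.counit.app B)
  exact mor₃Iso ≪≫ (shiftFunctor Y (1 : ℤ)).mapIso counitIso

noncomputable def iShriekObjIsoOfDistinguished {Z : D} {g : Z ⟶ K}
    {u : B ⟶ R.iShriek.obj Z} {C : Y}
    {v : R.iShriek.obj Z ⟶ C} {w : C ⟶ B⟦(1 : ℤ)⟧}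
    (hU : Triangle.mk u v w ∈ distTriang Y)
    (hT : Triangle.mk ((R.adj_i₂.homEquiv B Z).symm u) g h ∈ distTriang D) :
    C ≅ R.iShriek.obj K := by
  let unitIso := asIso (R.adj_i₂.unit.app B)
  have hu : u ≫ 𝟙 _ = R.adj_i₂.unit.app B ≫ R.iShriek.map ((R.adj_i₂.homEquiv B Z).symm u) := by
    simpa only [Category.comp_id, Adjunction.homEquiv_unit] using
      ((R.adj_i₂.homEquiv B Z).apply_symm_apply u).symm
  exact Triangle.π₃.mapIso <|
    isoTriangleOfIso₁₂ _ _ hU (R.iShriek.map_distinguished _ hT) unitIso (Iso.refl _) hu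

end Triangle

end Glueing.Recollement

open Glueing CategoryTheory Limits Pretriangulated in
/-- Glueing of silting objects: let `X₀`, `Y₀` be silting objects of `X`, `Y`, lying in
the co-hearts of the associated co-t-structures, and let `K` be defined by the triangle
`i_*β_{≥1}i^!j_!X₀ → j_!X₀ → K → (i_*β_{≥1}i^!j_!X₀)[1]`, where
`β_{≥1}i^!j_!X₀ → i^!j_!X₀ → β_{≤0}i^!j_!X₀ → ⋯` is a truncation triangle for the
co-t-structure on `Y` and the first map corresponds to `u` via the adjunction
`(i_*, i^!)`. Then `K` lies in the co-heart of the glued co-t-structure on `D`. -/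
theorem glued_silting_mem_coheart
    {D Y X : Type*} [Category D] [HasZeroObject D] [Preadditive D] [HasShift D ℤ]
    [∀ n : ℤ, (shiftFunctor D n).Additive] [Pretriangulated D]
    [Category Y] [HasZeroObject Y] [Preadditive Y] [HasShift Y ℤ]
    [∀ n : ℤ, (shiftFunctor Y n).Additive] [Pretriangulated Y]
    [Category X] [HasZeroObject X] [Preadditive X] [HasShift X ℤ]
    [∀ n : ℤ, (shiftFunctor X n).Additive] [Pretriangulated X]
    (R : Recollement D Y X)
    {XGe XLe : X → Prop} {YGe YLe : Y → Prop}
    (hX : IsCoTStructure X XGe XLe) (hY : IsCoTStructure Y YGe YLe)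
    {X₀ : X} {Y₀ : Y} (hsX : IsSilting X X₀) (hsY : IsSilting Y Y₀)
    (hX₀ : XGe X₀ ∧ XLe X₀) (hY₀ : YGe Y₀ ∧ YLe Y₀)
    {B₁ B₀ : Y} (hB₁ : YGe (B₁⟦(1 : ℤ)⟧)) (hB₀ : YLe B₀)
    {u : B₁ ⟶ R.iShriek.obj (R.jLower.obj X₀)}
    {v : R.iShriek.obj (R.jLower.obj X₀) ⟶ B₀} {w : B₀ ⟶ B₁⟦(1 : ℤ)⟧}
    (hTrunc : Triangle.mk u v w ∈ distinguishedTriangles)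
    {K : D} {g : R.jLower.obj X₀ ⟶ K} {h : K ⟶ (R.iLower.obj B₁)⟦(1 : ℤ)⟧}
    (hK : Triangle.mk ((R.adj_i₂.homEquiv B₁ (R.jLower.obj X₀)).symm u) g h ∈
      distinguishedTriangles) :
    (XGe (R.jStar.obj K) ∧ YGe (R.iStar.obj K)) ∧
      (XLe (R.jStar.obj K) ∧ YLe (R.iShriek.obj K)) := by
  have eX : X₀ ≅ R.jStar.obj K :=
    have := R.isIso_jStar_map_of_distinguished hK
    asIso (R.adj_j₁.unit.app X₀) ≪≫ asIso (R.jStar.map g)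
  exact ⟨⟨hX.isoClosed_ge eX hX₀.1,
      hY.isoClosed_ge (R.iStarObjIsoShiftOfDistinguished hK).symm hB₁⟩,
    ⟨hX.isoClosed_le eX hX₀.2, hY.isoClosed_le (R.iShriekObjIsoOfDistinguished hTrunc hK) hB₀⟩⟩
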